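/- Soundness of the goal-directed proof system for ACLuN1: for every set of propositional formulas Γ and every formula G, if a line A_{Δ,Θ} (formula A, D-condition Δ, A-condition Θ) occurs in a goal-directed proof from Γ with main goal G, then Γ ∪ Δ ⊢_CLuN A ∨ Dab(Θ). -/

import Mathlib

/-- Propositional formulas: variables, ⊥, ⊃, ∧, ∨, ≡, and paraconsistent negation ~. -/
inductive Formula : Type
  | var : ℕ → Formula
  | bot : Formula
  | imp : Formula → Formula → Formula
  | conj : Formula → Formula → Formula
  | disj : Formula → Formula → Formula
  | equiv : Formula → Formula → Formula
  | pneg : Formula → Formula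
  deriving DecidableEq

namespace Formula

/-- Classical negation: ¬A := A ⊃ ⊥. -/
def neg (A : Formula) : Formula := imp A bot

end Formula

/-- Hilbert-style derivability. `cl = false` gives CLuN (full positive classical logic,
including Peirce's law, plus ⊥ ⊃ A and A ∨ ~A, with modus ponens as only rule);
`cl = true` additionally has the axiom schema (A ∧ ~A) ⊃ B, giving CL. -/
inductive Deriv (cl : Bool) (Γ : Set Formula) : Formula → Prop
  | prem {A : Formula} : A ∈ Γ → Deriv cl Γ A
  | axK (A B : Formula) : Deriv cl Γ (A.imp (B.imp A))
  | axS (A B C : Formula) : Deriv cl Γ ((A.imp (B.imp C)).imp ((A.imp B).imp (A.imp C)))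
  | axPeirce (A B : Formula) : Deriv cl Γ (((A.imp B).imp A).imp A)
  | axAndElimL (A B : Formula) : Deriv cl Γ ((A.conj B).imp A)
  | axAndElimR (A B : Formula) : Deriv cl Γ ((A.conj B).imp B)
  | axAndIntro (A B : Formula) : Deriv cl Γ (A.imp (B.imp (A.conj B)))
  | axOrIntroL (A B : Formula) : Deriv cl Γ (A.imp (A.disj B))
  | axOrIntroR (A B : Formula) : Deriv cl Γ (B.imp (A.disj B))
  | axOrElim (A B C : Formula) : Deriv cl Γ ((A.imp C).imp ((B.imp C).imp ((A.disj B).imp C)))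
  | axIffElimL (A B : Formula) : Deriv cl Γ ((A.equiv B).imp (A.imp B))
  | axIffElimR (A B : Formula) : Deriv cl Γ ((A.equiv B).imp (B.imp A))
  | axIffIntro (A B : Formula) : Deriv cl Γ ((A.imp B).imp ((B.imp A).imp (A.equiv B)))
  | axBot (A : Formula) : Deriv cl Γ (Formula.bot.imp A)
  | axEM (A : Formula) : Deriv cl Γ (A.disj A.pneg)
  | axCL (A B : Formula) : cl = true → Deriv cl Γ ((A.conj A.pneg).imp B)
  | mp {A B : Formula} : Deriv cl Γ (A.imp B) → Deriv cl Γ A → Deriv cl Γ B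

/-- Γ ⊢_CLuN A -/
def CLuN (Γ : Set Formula) (A : Formula) : Prop := Deriv false Γ A

/-- Γ ⊢_CL A -/
def CL (Γ : Set Formula) (A : Formula) : Prop := Deriv true Γ A

/-- The set of abnormalities Ω: all formulas of the form A ∧ ~A. -/
def Omega : Set Formula := {F | ∃ A : Formula, F = A.conj A.pneg}

/-- An arbitrary (noncomputable) linear order on formulas, used only to pick a canonical
ordering of the disjuncts of a Dab-formula. -/
noncomputable instance : LinearOrder Formula :=
  @linearOrderOfSTO Formula WellOrderingRel _ (Classical.decRel _)

/-- Disjunction of a list of formulas; the empty disjunction is ⊥. -/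
def listDisj : List Formula → Formula
  | [] => Formula.bot
  | [A] => A
  | A :: B :: rest => A.disj (listDisj (B :: rest))

/-- Dab(Δ): the disjunction of the members of the finite set Δ (by convention Dab(∅) := ⊥). -/
noncomputable def Dab (Δ : Finset Formula) : Formula := listDisj (Δ.sort (· ≤ ·))

/-- Dab(Δ) is a minimal Dab-consequence of Γ: Δ is finite and nonempty, Δ ⊆ Ω,
Γ ⊢_CLuN Dab(Δ), and no nonempty Δ' ⊊ Δ has Γ ⊢_CLuN Dab(Δ'). -/
def MinDabConsequence (Γ : Set Formula) (Δ : Finset Formula) : Prop :=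
  Δ.Nonempty ∧ ↑Δ ⊆ Omega ∧ CLuN Γ (Dab Δ) ∧
    ∀ Δ' : Finset Formula, Δ'.Nonempty → Δ' ⊂ Δ → ¬ CLuN Γ (Dab Δ')

/-- U(Γ): the set of formulas unreliable with respect to Γ. -/
def U (Γ : Set Formula) : Set Formula :=
  {A | ∃ Δ : Finset Formula, MinDabConsequence Γ Δ ∧ A ∈ Δ}

/-- The lines A_{Δ,Θ} (formula A, D-condition Δ, A-condition Θ) that may occur in a
goal-directed proof from Γ with main goal G. -/
inductive GD (Γ : Set Formula) (G : Formula) :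
    Formula → Finset Formula → Finset Formula → Prop
  | prem {A : Formula} : A ∈ Γ → GD Γ G A ∅ ∅
  | goal : GD Γ G G {G} ∅
  | agoal {Δ : Finset Formula} : Δ.Nonempty → ↑Δ ⊆ Omega → GD Γ G (Dab Δ) {Dab Δ} ∅
  | efq {A : Formula} : A ∈ Γ → GD Γ G G {A.neg} ∅
  -- formula analysing rules
  | impE1 {A B : Formula} {Δ Θ : Finset Formula} :
      GD Γ G (A.imp B) Δ Θ → GD Γ G B (Δ ∪ {A}) Θ
  | impE2 {A B : Formula} {Δ Θ : Finset Formula} :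
      GD Γ G (A.imp B) Δ Θ → GD Γ G A.neg (Δ ∪ {B.neg}) Θ
  | negImpE1 {A B : Formula} {Δ Θ : Finset Formula} :
      GD Γ G (A.imp B).neg Δ Θ → GD Γ G A Δ Θ
  | negImpE2 {A B : Formula} {Δ Θ : Finset Formula} :
      GD Γ G (A.imp B).neg Δ Θ → GD Γ G B.neg Δ Θ
  | disjE1 {A B : Formula} {Δ Θ : Finset Formula} :
      GD Γ G (A.disj B) Δ Θ → GD Γ G A (Δ ∪ {B.neg}) Θ
  | disjE2 {A B : Formula} {Δ Θ : Finset Formula} :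
      GD Γ G (A.disj B) Δ Θ → GD Γ G B (Δ ∪ {A.neg}) Θ
  | negDisjE1 {A B : Formula} {Δ Θ : Finset Formula} :
      GD Γ G (A.disj B).neg Δ Θ → GD Γ G A.neg Δ Θ
  | negDisjE2 {A B : Formula} {Δ Θ : Finset Formula} :
      GD Γ G (A.disj B).neg Δ Θ → GD Γ G B.neg Δ Θ
  | conjE1 {A B : Formula} {Δ Θ : Finset Formula} :
      GD Γ G (A.conj B) Δ Θ → GD Γ G A Δ Θ
  | conjE2 {A B : Formula} {Δ Θ : Finset Formula} :
      GD Γ G (A.conj B) Δ Θ → GD Γ G B Δ Θ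
  | negConjE {A B : Formula} {Δ Θ : Finset Formula} :
      GD Γ G (A.conj B).neg Δ Θ → GD Γ G (A.neg.disj B.neg) Δ Θ
  | equivE1 {A B : Formula} {Δ Θ : Finset Formula} :
      GD Γ G (A.equiv B) Δ Θ → GD Γ G (A.imp B) Δ Θ
  | equivE2 {A B : Formula} {Δ Θ : Finset Formula} :
      GD Γ G (A.equiv B) Δ Θ → GD Γ G (B.imp A) Δ Θ
  | negEquivE1 {A B : Formula} {Δ Θ : Finset Formula} :
      GD Γ G (A.equiv B).neg Δ Θ → GD Γ G (A.disj B) Δ Θ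
  | negEquivE2 {A B : Formula} {Δ Θ : Finset Formula} :
      GD Γ G (A.equiv B).neg Δ Θ → GD Γ G (A.neg.disj B.neg) Δ Θ
  | pnegE {A : Formula} {Δ Θ : Finset Formula} :
      GD Γ G A.pneg Δ Θ → GD Γ G A.neg Δ (Θ ∪ {A.conj A.pneg})
  | negPnegE {A : Formula} {Δ Θ : Finset Formula} :
      GD Γ G A.pneg.neg Δ Θ → GD Γ G A Δ Θ
  | negNegE {A : Formula} {Δ Θ : Finset Formula} :
      GD Γ G A.neg.neg Δ Θ → GD Γ G A Δ Θ
  -- condition analysing rules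
  | cImpE1 {A B C : Formula} {Δ Θ : Finset Formula} :
      GD Γ G A (Δ ∪ {B.imp C}) Θ → GD Γ G A (Δ ∪ {B.neg}) Θ
  | cImpE2 {A B C : Formula} {Δ Θ : Finset Formula} :
      GD Γ G A (Δ ∪ {B.imp C}) Θ → GD Γ G A (Δ ∪ {C}) Θ
  | cNegImpE {A B C : Formula} {Δ Θ : Finset Formula} :
      GD Γ G A (Δ ∪ {(B.imp C).neg}) Θ → GD Γ G A (Δ ∪ {B, C.neg}) Θ
  | cDisjE1 {A B C : Formula} {Δ Θ : Finset Formula} :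
      GD Γ G A (Δ ∪ {B.disj C}) Θ → GD Γ G A (Δ ∪ {B}) Θ
  | cDisjE2 {A B C : Formula} {Δ Θ : Finset Formula} :
      GD Γ G A (Δ ∪ {B.disj C}) Θ → GD Γ G A (Δ ∪ {C}) Θ
  | cNegDisjE {A B C : Formula} {Δ Θ : Finset Formula} :
      GD Γ G A (Δ ∪ {(B.disj C).neg}) Θ → GD Γ G A (Δ ∪ {B.neg, C.neg}) Θ
  | cConjE {A B C : Formula} {Δ Θ : Finset Formula} :
      GD Γ G A (Δ ∪ {B.conj C}) Θ → GD Γ G A (Δ ∪ {B, C}) Θ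
  | cNegConjE1 {A B C : Formula} {Δ Θ : Finset Formula} :
      GD Γ G A (Δ ∪ {(B.conj C).neg}) Θ → GD Γ G A (Δ ∪ {B.neg}) Θ
  | cNegConjE2 {A B C : Formula} {Δ Θ : Finset Formula} :
      GD Γ G A (Δ ∪ {(B.conj C).neg}) Θ → GD Γ G A (Δ ∪ {C.neg}) Θ
  | cEquivE1 {A B C : Formula} {Δ Θ : Finset Formula} :
      GD Γ G A (Δ ∪ {B.equiv C}) Θ → GD Γ G A (Δ ∪ {B, C}) Θ
  | cEquivE2 {A B C : Formula} {Δ Θ : Finset Formula} :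
      GD Γ G A (Δ ∪ {B.equiv C}) Θ → GD Γ G A (Δ ∪ {B.neg, C.neg}) Θ
  | cNegEquivE1 {A B C : Formula} {Δ Θ : Finset Formula} :
      GD Γ G A (Δ ∪ {(B.equiv C).neg}) Θ → GD Γ G A (Δ ∪ {B.neg, C}) Θ
  | cNegEquivE2 {A B C : Formula} {Δ Θ : Finset Formula} :
      GD Γ G A (Δ ∪ {(B.equiv C).neg}) Θ → GD Γ G A (Δ ∪ {B, C.neg}) Θ
  | cPnegE {A B : Formula} {Δ Θ : Finset Formula} :
      GD Γ G A (Δ ∪ {B.pneg}) Θ → GD Γ G A (Δ ∪ {B.neg}) Θ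
  | cNegPnegE {A B : Formula} {Δ Θ : Finset Formula} :
      GD Γ G A (Δ ∪ {B.pneg.neg}) Θ → GD Γ G A (Δ ∪ {B}) (Θ ∪ {B.conj B.pneg})
  | cNegNegE {A B : Formula} {Δ Θ : Finset Formula} :
      GD Γ G A (Δ ∪ {B.neg.neg}) Θ → GD Γ G A (Δ ∪ {B}) Θ
  -- Trans, EM, EM0, IC
  | trans {A B : Formula} {Δ Δ' Θ Θ' : Finset Formula} :
      GD Γ G A (Δ ∪ {B}) Θ → GD Γ G B Δ' Θ' → GD Γ G A (Δ ∪ Δ') (Θ ∪ Θ')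
  | em {A B : Formula} {Δ Δ' Θ Θ' : Finset Formula} :
      GD Γ G A (Δ ∪ {B}) Θ → GD Γ G A (Δ' ∪ {B.neg}) Θ' →
      GD Γ G A (Δ ∪ Δ') (Θ ∪ Θ')
  | em0 {A : Formula} {Δ Θ : Finset Formula} :
      GD Γ G A (Δ ∪ {A.neg}) Θ → GD Γ G A Δ Θ
  | ic {Λ Λ' Δ Θ : Finset Formula} :
      (Λ ∪ Λ').Nonempty → ↑Λ ⊆ Omega → ↑Λ' ⊆ Omega →
      GD Γ G (Dab (Λ ∪ Λ')) Δ (Θ ∪ Λ') → GD Γ G (Dab (Λ ∪ Λ')) Δ Θ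

/-! Read a line `A_{Δ,Θ}` as `Γ ∪ Δ ⊢ A ∨ Dab(Θ)` and check that every rule preserves this
reading. Formula-analysing rules are CLuN-valid inferences carried out alongside the disjunct
`Dab(Θ)`; condition-analysing rules replace a condition by conditions from which it is derivable.
The two steps that are not CLuN-valid, `~A ⊢ ¬A` and `A ⊢ ¬~A`, fail only in the presence of
`A ∧ ~A`, and this is exactly the abnormality they add to `Θ`. -/

namespace Deriv

variable {cl : Bool} {Γ Γ' : Set Formula} {A B C D : Formula}

theorem imp_self : Deriv cl Γ (A.imp A) :=
  mp (mp (axS A (A.imp A) A) (axK A (A.imp A))) (axK A A)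

/-- The deduction theorem and monotonicity (with a provable antecedent `A`) are instances. -/
theorem imp_of_forall_imp (hΓ : ∀ B ∈ Γ', Deriv cl Γ (A.imp B)) (h : Deriv cl Γ' C) :
    Deriv cl Γ (A.imp C) := by
  induction h with
  | prem hB => exact hΓ _ hB
  | mp _ _ ih₁ ih₂ => exact mp (mp (axS _ _ _) ih₁) ih₂
  | axK => exact mp (axK _ _) (axK _ _)
  | axS => exact mp (axK _ _) (axS _ _ _)
  | axPeirce => exact mp (axK _ _) (axPeirce _ _)
  | axAndElimL => exact mp (axK _ _) (axAndElimL _ _)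
  | axAndElimR => exact mp (axK _ _) (axAndElimR _ _)
  | axAndIntro => exact mp (axK _ _) (axAndIntro _ _)
  | axOrIntroL => exact mp (axK _ _) (axOrIntroL _ _)
  | axOrIntroR => exact mp (axK _ _) (axOrIntroR _ _)
  | axOrElim => exact mp (axK _ _) (axOrElim _ _ _)
  | axIffElimL => exact mp (axK _ _) (axIffElimL _ _)
  | axIffElimR => exact mp (axK _ _) (axIffElimR _ _)
  | axIffIntro => exact mp (axK _ _) (axIffIntro _ _)
  | axBot => exact mp (axK _ _) (axBot _)
  | axEM => exact mp (axK _ _) (axEM _)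
  | axCL _ _ hcl => exact mp (axK _ _) (axCL _ _ hcl)

theorem imp_intro (h : Deriv cl (insert A Γ) B) : Deriv cl Γ (A.imp B) :=
  imp_of_forall_imp (fun _ hC => hC.elim (· ▸ imp_self) (mp (axK _ _) ∘ prem)) h

theorem mono (h : Deriv cl Γ A) (hΓ : Γ ⊆ Γ') : Deriv cl Γ' A :=
  mp (imp_of_forall_imp (A := Formula.bot.imp Formula.bot)
    (fun B hB => mp (axK B _) (prem (hΓ hB))) h) imp_self

theorem weaken (h : Deriv cl Γ A) : Deriv cl (insert B Γ) A :=
  h.mono (Set.subset_insert _ _)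

theorem hyp : Deriv cl (insert A Γ) A :=
  prem (Set.mem_insert _ _)

theorem cut (hA : Deriv cl Γ A) (h : Deriv cl (insert A Γ) B) : Deriv cl Γ B :=
  mp (imp_intro h) hA

theorem exfalso (h : Deriv cl Γ Formula.bot) : Deriv cl Γ A :=
  mp (axBot A) h

theorem absurd (hn : Deriv cl Γ A.neg) (h : Deriv cl Γ A) : Deriv cl Γ B :=
  exfalso (mp hn h)

theorem by_contra (h : Deriv cl (insert A.neg Γ) Formula.bot) : Deriv cl Γ A :=
  mp (axPeirce A Formula.bot) (imp_intro (exfalso h))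

theorem mt (h : Deriv cl Γ (A.imp B)) (hnB : Deriv cl Γ B.neg) : Deriv cl Γ A.neg :=
  imp_intro (mp hnB.weaken (mp h.weaken hyp))

theorem conj_intro (hA : Deriv cl Γ A) (hB : Deriv cl Γ B) : Deriv cl Γ (A.conj B) :=
  mp (mp (axAndIntro A B) hA) hB

theorem conj_left (h : Deriv cl Γ (A.conj B)) : Deriv cl Γ A :=
  mp (axAndElimL A B) h

theorem conj_right (h : Deriv cl Γ (A.conj B)) : Deriv cl Γ B :=
  mp (axAndElimR A B) h

theorem disj_intro_left (h : Deriv cl Γ A) : Deriv cl Γ (A.disj B) :=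
  mp (axOrIntroL A B) h

theorem disj_intro_right (h : Deriv cl Γ B) : Deriv cl Γ (A.disj B) :=
  mp (axOrIntroR A B) h

theorem disj_elim (h : Deriv cl Γ (A.disj B)) (hA : Deriv cl (insert A Γ) C)
    (hB : Deriv cl (insert B Γ) C) : Deriv cl Γ C :=
  mp (mp (mp (axOrElim A B C) (imp_intro hA)) (imp_intro hB)) h

theorem disj_neg_self : Deriv cl Γ (A.disj A.neg) :=
  by_contra <| absurd hyp <| disj_intro_right <| imp_intro <| absurd (prem (by simp)) <|
    disj_intro_left (B := A.neg) hyp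

theorem by_cases (hA : Deriv cl (insert A Γ) C) (hnA : Deriv cl (insert A.neg Γ) C) :
    Deriv cl Γ C :=
  disj_elim disj_neg_self hA hnA

theorem disj_map (h : Deriv cl Γ (A.disj C)) (f : ∀ {Γ'}, Deriv cl Γ' A → Deriv cl Γ' B) :
    Deriv cl Γ (B.disj C) :=
  disj_elim h (disj_intro_left (f hyp)) (disj_intro_right hyp)

theorem disj_map₂ (h : Deriv cl Γ (A.disj C)) (hD : Deriv cl Γ D)
    (f : ∀ {Γ'}, Deriv cl Γ' A → Deriv cl Γ' D → Deriv cl Γ' B) : Deriv cl Γ (B.disj C) :=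
  disj_elim h (disj_intro_left (f hyp hD.weaken)) (disj_intro_right hyp)

theorem disj_resolve_right (h : Deriv cl Γ (A.disj B)) (hnB : Deriv cl Γ B.neg) :
    Deriv cl Γ A :=
  disj_elim h hyp (absurd hnB.weaken hyp)

theorem disj_resolve_left (h : Deriv cl Γ (A.disj B)) (hnA : Deriv cl Γ A.neg) :
    Deriv cl Γ B :=
  disj_elim h (absurd hnA.weaken hyp) hyp

theorem equiv_intro (hAB : Deriv cl (insert A Γ) B) (hBA : Deriv cl (insert B Γ) A) :
    Deriv cl Γ (A.equiv B) :=
  mp (mp (axIffIntro A B) (imp_intro hAB)) (imp_intro hBA)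

theorem imp_of_equiv (h : Deriv cl Γ (A.equiv B)) : Deriv cl Γ (A.imp B) :=
  mp (axIffElimL A B) h

theorem imp_of_equiv_symm (h : Deriv cl Γ (A.equiv B)) : Deriv cl Γ (B.imp A) :=
  mp (axIffElimR A B) h

theorem of_neg_imp_left (h : Deriv cl Γ (A.imp B).neg) : Deriv cl Γ A :=
  by_contra <| mp h.weaken <| imp_intro <| absurd (prem (by simp)) hyp

theorem of_neg_imp_right (h : Deriv cl Γ (A.imp B).neg) : Deriv cl Γ B.neg :=
  imp_intro <| mp h.weaken <| imp_intro (prem (by simp))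

theorem neg_of_neg_disj_left (h : Deriv cl Γ (A.disj B).neg) : Deriv cl Γ A.neg :=
  imp_intro <| mp h.weaken (disj_intro_left hyp)

theorem neg_of_neg_disj_right (h : Deriv cl Γ (A.disj B).neg) : Deriv cl Γ B.neg :=
  imp_intro <| mp h.weaken (disj_intro_right hyp)

theorem disj_neg_of_neg_conj (h : Deriv cl Γ (A.conj B).neg) :
    Deriv cl Γ (A.neg.disj B.neg) :=
  by_cases (A := A)
    (by_cases (A := B) (absurd h.weaken.weaken (conj_intro (prem (by simp)) hyp))
      (disj_intro_right hyp))
    (disj_intro_left hyp)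

theorem disj_of_neg_equiv (h : Deriv cl Γ (A.equiv B).neg) : Deriv cl Γ (A.disj B) :=
  by_cases (A := A) (disj_intro_left hyp) <| by_cases (A := B) (disj_intro_right hyp) <|
    absurd h.weaken.weaken <|
      equiv_intro (absurd (prem (by simp)) hyp) (absurd (prem (by simp)) hyp)

theorem disj_neg_of_neg_equiv (h : Deriv cl Γ (A.equiv B).neg) :
    Deriv cl Γ (A.neg.disj B.neg) :=
  by_cases (A := A)
    (by_cases (A := B)
      (absurd h.weaken.weaken (equiv_intro (prem (by simp)) (prem (by simp))))
      (disj_intro_right hyp))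
    (disj_intro_left hyp)

theorem of_neg_pneg (h : Deriv cl Γ A.pneg.neg) : Deriv cl Γ A :=
  disj_elim (axEM A) hyp (absurd h.weaken hyp)

theorem of_neg_neg (h : Deriv cl Γ A.neg.neg) : Deriv cl Γ A :=
  by_contra (mp h.weaken hyp)

theorem imp_of_neg (h : Deriv cl Γ A.neg) : Deriv cl Γ (A.imp B) :=
  imp_intro (absurd h.weaken hyp)

theorem imp_of_right (h : Deriv cl Γ B) : Deriv cl Γ (A.imp B) :=
  imp_intro h.weaken

theorem neg_imp_of (hA : Deriv cl Γ A) (hnB : Deriv cl Γ B.neg) : Deriv cl Γ (A.imp B).neg :=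
  imp_intro <| mp hnB.weaken (mp hyp hA.weaken)

theorem neg_disj_intro (hnA : Deriv cl Γ A.neg) (hnB : Deriv cl Γ B.neg) :
    Deriv cl Γ (A.disj B).neg :=
  imp_intro <| disj_elim hyp (mp hnA.weaken.weaken hyp) (mp hnB.weaken.weaken hyp)

theorem neg_conj_of_neg_left (hnA : Deriv cl Γ A.neg) : Deriv cl Γ (A.conj B).neg :=
  imp_intro <| mp hnA.weaken (conj_left hyp)

theorem neg_conj_of_neg_right (hnB : Deriv cl Γ B.neg) : Deriv cl Γ (A.conj B).neg :=
  imp_intro <| mp hnB.weaken (conj_right hyp)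

theorem equiv_of_both (hA : Deriv cl Γ A) (hB : Deriv cl Γ B) : Deriv cl Γ (A.equiv B) :=
  equiv_intro hB.weaken hA.weaken

theorem equiv_of_neg_both (hnA : Deriv cl Γ A.neg) (hnB : Deriv cl Γ B.neg) :
    Deriv cl Γ (A.equiv B) :=
  equiv_intro (absurd hnA.weaken hyp) (absurd hnB.weaken hyp)

theorem neg_equiv_of_neg_left (hnA : Deriv cl Γ A.neg) (hB : Deriv cl Γ B) :
    Deriv cl Γ (A.equiv B).neg :=
  imp_intro <| mp hnA.weaken (mp (imp_of_equiv_symm hyp) hB.weaken)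

theorem neg_equiv_of_neg_right (hA : Deriv cl Γ A) (hnB : Deriv cl Γ B.neg) :
    Deriv cl Γ (A.equiv B).neg :=
  imp_intro <| mp hnB.weaken (mp (imp_of_equiv hyp) hA.weaken)

theorem pneg_of_neg (h : Deriv cl Γ A.neg) : Deriv cl Γ A.pneg :=
  disj_elim (axEM A) (absurd h.weaken hyp) hyp

theorem neg_neg_intro (h : Deriv cl Γ A) : Deriv cl Γ A.neg.neg :=
  imp_intro (mp hyp h.weaken)

theorem neg_disj_abnormal_of_pneg (h : Deriv cl Γ A.pneg) :
    Deriv cl Γ (A.neg.disj (A.conj A.pneg)) :=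
  by_cases (A := A) (disj_intro_right (conj_intro hyp h.weaken)) (disj_intro_left hyp)

theorem neg_pneg_disj_abnormal (h : Deriv cl Γ A) :
    Deriv cl Γ (A.pneg.neg.disj (A.conj A.pneg)) :=
  by_cases (A := A.pneg) (disj_intro_right (conj_intro h.weaken hyp)) (disj_intro_left hyp)

theorem imp_listDisj {l : List Formula} (hA : A ∈ l) : Deriv cl Γ (A.imp (listDisj l)) := by
  induction l with
  | nil => cases hA
  | cons B l ih =>
    rcases List.mem_cons.1 hA with rfl | hA
    · cases l with
      | nil => exact imp_self
      | cons => exact axOrIntroL _ _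
    · cases l with
      | nil => cases hA
      | cons => exact imp_intro (disj_intro_right (mp (ih hA).weaken hyp))

theorem listDisj_imp {l : List Formula} (hl : ∀ A ∈ l, Deriv cl Γ (A.imp C)) :
    Deriv cl Γ ((listDisj l).imp C) := by
  induction l with
  | nil => exact axBot C
  | cons B l ih =>
    cases l with
    | nil => exact hl B (List.mem_singleton_self B)
    | cons =>
      exact mp (mp (axOrElim _ _ _) (hl B List.mem_cons_self))
        (ih fun A hA => hl A (List.mem_cons_of_mem B hA))

variable {Θ Θ' Λ Λ' : Finset Formula}

theorem dab_of_mem (hA : A ∈ Θ) (h : Deriv cl Γ A) : Deriv cl Γ (Dab Θ) :=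
  mp (imp_listDisj ((Finset.mem_sort _).2 hA)) h

theorem dab_elim (h : Deriv cl Γ (Dab Θ)) (hΘ : ∀ A ∈ Θ, Deriv cl (insert A Γ) C) :
    Deriv cl Γ C :=
  mp (listDisj_imp fun A hA => imp_intro (hΘ A ((Finset.mem_sort _).1 hA))) h

theorem dab_mono (h : Deriv cl Γ (Dab Θ)) (hΘ : Θ ⊆ Θ') : Deriv cl Γ (Dab Θ') :=
  dab_elim h fun _ hA => dab_of_mem (hΘ hA) hyp

theorem disj_dab_mono (h : Deriv cl Γ (A.disj (Dab Θ))) (hΘ : Θ ⊆ Θ') :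
    Deriv cl Γ (A.disj (Dab Θ')) :=
  disj_elim h (disj_intro_left hyp) (disj_intro_right (dab_mono hyp hΘ))

theorem disj_dab_cut (h₁ : Deriv cl Γ (A.disj (Dab Θ)))
    (h₂ : Deriv cl (insert A Γ) (B.disj (Dab Θ'))) : Deriv cl Γ (B.disj (Dab (Θ ∪ Θ'))) :=
  disj_elim h₁ (disj_dab_mono h₂ Finset.subset_union_right)
    (disj_intro_right (dab_mono hyp Finset.subset_union_left))

theorem dab_disj_dab_absorb (hΛ : Λ' ⊆ Λ) (h : Deriv cl Γ ((Dab Λ).disj (Dab (Θ ∪ Λ')))) :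
    Deriv cl Γ ((Dab Λ).disj (Dab Θ)) :=
  disj_elim h (disj_intro_left hyp) <| dab_elim hyp fun _ hA => (Finset.mem_union.1 hA).elim
    (fun hΘ => disj_intro_right (dab_of_mem hΘ hyp))
    (fun hΛ' => disj_intro_left (dab_of_mem (hΛ hΛ') hyp))

end Deriv

theorem Dab_singleton (A : Formula) : Dab {A} = A := by
  simp [Dab, listDisj]

theorem union_coe_union_singleton {α : Type*} [DecidableEq α] (Γ : Set α) (Δ : Finset α)
    (X : α) : Γ ∪ ↑(Δ ∪ {X}) = insert X (Γ ∪ ↑Δ) := by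
  rw [Finset.coe_union, Finset.coe_singleton, Set.union_singleton, Set.union_insert]

namespace Deriv

variable {cl : Bool} {Γ : Set Formula} {A B C X : Formula} {Δ Δ' Θ Θ' : Finset Formula}

theorem mono_union_left (h : Deriv cl (Γ ∪ ↑Δ) A) : Deriv cl (Γ ∪ ↑(Δ ∪ Δ')) A :=
  h.mono (Set.union_subset_union_right _ (Finset.coe_subset.2 Finset.subset_union_left))

theorem mono_union_right (h : Deriv cl (Γ ∪ ↑Δ') A) : Deriv cl (Γ ∪ ↑(Δ ∪ Δ')) A :=
  h.mono (Set.union_subset_union_right _ (Finset.coe_subset.2 Finset.subset_union_right))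

theorem insert_of_union_singleton (h : Deriv cl (Γ ∪ ↑(Δ ∪ {X})) A) (hΔ : Δ ⊆ Δ') :
    Deriv cl (insert X (Γ ∪ ↑Δ')) A := by
  rw [union_coe_union_singleton] at h
  exact h.mono (Set.insert_subset_insert (Set.union_subset_union_right _ (by exact_mod_cast hΔ)))

theorem cut_condition (h : Deriv cl (Γ ∪ ↑(Δ ∪ {X})) C) (hX : Deriv cl (Γ ∪ ↑(Δ ∪ Δ')) X) :
    Deriv cl (Γ ∪ ↑(Δ ∪ Δ')) C :=
  cut hX (h.insert_of_union_singleton Finset.subset_union_left)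

theorem disj_dab_cut_condition (h : Deriv cl (Γ ∪ ↑(Δ ∪ {X})) (A.disj (Dab Θ)))
    (hX : Deriv cl (Γ ∪ ↑(Δ ∪ Δ')) (X.disj (Dab Θ'))) :
    Deriv cl (Γ ∪ ↑(Δ ∪ Δ')) (A.disj (Dab (Θ ∪ Θ'))) := by
  rw [Finset.union_comm Θ]
  exact disj_dab_cut hX (h.insert_of_union_singleton Finset.subset_union_left)

theorem disj_dab_by_cases_condition (h₁ : Deriv cl (Γ ∪ ↑(Δ ∪ {B})) (A.disj (Dab Θ)))
    (h₂ : Deriv cl (Γ ∪ ↑(Δ' ∪ {B.neg})) (A.disj (Dab Θ'))) :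
    Deriv cl (Γ ∪ ↑(Δ ∪ Δ')) (A.disj (Dab (Θ ∪ Θ'))) :=
  by_cases
    (disj_dab_mono (h₁.insert_of_union_singleton Finset.subset_union_left) Finset.subset_union_left)
    (disj_dab_mono (h₂.insert_of_union_singleton Finset.subset_union_right)
      Finset.subset_union_right)

end Deriv

open Deriv in
/-- Soundness of the goal-directed proof system: if the line A_{Δ,Θ} occurs in a
goal-directed proof from Γ with main goal G, then Γ ∪ Δ ⊢_CLuN A ∨ Dab(Θ). -/
theorem gd_sound (Γ : Set Formula) (G A : Formula) (Δ Θ : Finset Formula)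
    (h : GD Γ G A Δ Θ) : CLuN (Γ ∪ ↑Δ) (A.disj (Dab Θ)) := by
  unfold CLuN
  induction h with
  | prem hA => exact disj_intro_left (prem (Or.inl hA))
  | goal | agoal _ _ => exact disj_intro_left (prem (by simp))
  | efq hA => exact absurd (prem (by simp)) (prem (Or.inl hA))
  | impE1 _ ih => exact ih.mono_union_left.disj_map₂ (prem (by simp)) mp
  | impE2 _ ih => exact ih.mono_union_left.disj_map₂ (prem (by simp)) mt
  | negImpE1 _ ih => exact ih.disj_map of_neg_imp_left
  | negImpE2 _ ih => exact ih.disj_map of_neg_imp_right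
  | disjE1 _ ih => exact ih.mono_union_left.disj_map₂ (prem (by simp)) disj_resolve_right
  | disjE2 _ ih => exact ih.mono_union_left.disj_map₂ (prem (by simp)) disj_resolve_left
  | negDisjE1 _ ih => exact ih.disj_map neg_of_neg_disj_left
  | negDisjE2 _ ih => exact ih.disj_map neg_of_neg_disj_right
  | conjE1 _ ih => exact ih.disj_map conj_left
  | conjE2 _ ih => exact ih.disj_map conj_right
  | negConjE _ ih => exact ih.disj_map disj_neg_of_neg_conj
  | equivE1 _ ih => exact ih.disj_map imp_of_equiv
  | equivE2 _ ih => exact ih.disj_map imp_of_equiv_symm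
  | negEquivE1 _ ih => exact ih.disj_map disj_of_neg_equiv
  | negEquivE2 _ ih => exact ih.disj_map disj_neg_of_neg_equiv
  | pnegE _ ih =>
    exact ih.disj_dab_cut (by rw [Dab_singleton]; exact neg_disj_abnormal_of_pneg hyp)
  | negPnegE _ ih => exact ih.disj_map of_neg_pneg
  | negNegE _ ih => exact ih.disj_map of_neg_neg
  | cImpE1 _ ih => exact ih.cut_condition (imp_of_neg (prem (by simp)))
  | cImpE2 _ ih => exact ih.cut_condition (imp_of_right (prem (by simp)))
  | cNegImpE _ ih => exact ih.cut_condition (neg_imp_of (prem (by simp)) (prem (by simp)))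
  | cDisjE1 _ ih => exact ih.cut_condition (disj_intro_left (prem (by simp)))
  | cDisjE2 _ ih => exact ih.cut_condition (disj_intro_right (prem (by simp)))
  | cNegDisjE _ ih => exact ih.cut_condition (neg_disj_intro (prem (by simp)) (prem (by simp)))
  | cConjE _ ih => exact ih.cut_condition (conj_intro (prem (by simp)) (prem (by simp)))
  | cNegConjE1 _ ih => exact ih.cut_condition (neg_conj_of_neg_left (prem (by simp)))
  | cNegConjE2 _ ih => exact ih.cut_condition (neg_conj_of_neg_right (prem (by simp)))
  | cEquivE1 _ ih => exact ih.cut_condition (equiv_of_both (prem (by simp)) (prem (by simp)))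
  | cEquivE2 _ ih =>
    exact ih.cut_condition (equiv_of_neg_both (prem (by simp)) (prem (by simp)))
  | cNegEquivE1 _ ih =>
    exact ih.cut_condition (neg_equiv_of_neg_left (prem (by simp)) (prem (by simp)))
  | cNegEquivE2 _ ih =>
    exact ih.cut_condition (neg_equiv_of_neg_right (prem (by simp)) (prem (by simp)))
  | cPnegE _ ih => exact ih.cut_condition (pneg_of_neg (prem (by simp)))
  | cNegPnegE _ ih =>
    exact ih.disj_dab_cut_condition
      (by rw [Dab_singleton]; exact neg_pneg_disj_abnormal (prem (by simp)))
  | cNegNegE _ ih => exact ih.cut_condition (neg_neg_intro (prem (by simp)))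
  | trans _ _ ih₁ ih₂ => exact ih₁.disj_dab_cut_condition ih₂.mono_union_right
  | em _ _ ih₁ ih₂ => exact disj_dab_by_cases_condition ih₁ ih₂
  | em0 _ ih =>
    exact by_cases (disj_intro_left hyp) (by rwa [union_coe_union_singleton] at ih)
  | ic _ _ _ _ ih => exact dab_disj_dab_absorb Finset.subset_union_right ih
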